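/- For every A ∈ 𝓜 and all D, x > 1, one has the identity σ_{log(A)}(log D, log x) = (ρ_A(Dx) − ρ_A(x))/log D + ξ_A(D, x). -/

import Mathlib

/-!
Substituting `y = exp u` turns `σ_{log A}(log D, log x)` into `(1/log D) ∫ₓ^{Dx} 1_A(y)/y dy`.
On the other side `ρ_A(y)/y = S(y)/y²` with `S(y) = ∫₀^y 1_A`; integrating by parts against
`-1/y` (legitimate because `S` is absolutely continuous with `S' = 1_A` almost everywhere) gives
`∫ₓ^{Dx} ρ_A(y)/y dy = ρ_A(x) - ρ_A(Dx) + ∫ₓ^{Dx} 1_A(y)/y dy`.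
-/

open MeasureTheory Filter Set Topology

noncomputable section

namespace UPN

/-- The half line `[0,∞)` viewed as a subset of `ℝ`. -/
def Ray : Set ℝ := Set.Ici 0

/-- The indicator function `1_A`. -/
def ind (A : Set ℝ) : ℝ → ℝ := Set.indicator A fun _ => (1 : ℝ)

/-- The collection `𝓜` of countable unions `⋃ᵢ [a_{2i-1}, a_{2i})` for a
nondecreasing nonnegative sequence `a`. -/
def Mcal : Set (Set ℝ) :=
  {A | ∃ a : ℕ → ℝ, 0 ≤ a 0 ∧ Monotone a ∧
        A = ⋃ i : ℕ, Set.Ico (a (2 * i)) (a (2 * i + 1))}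

/-- The density function `ρ_A`: `ρ_A(0) = 0` and `ρ_A(x) = (1/x)∫₀ˣ 1_A(y) dy`. -/
def rho (A : Set ℝ) (x : ℝ) : ℝ :=
  if x = 0 then 0 else (1 / x) * ∫ y in (0:ℝ)..x, ind A y

/-- The collection `𝓒` of elements of `𝓜` having natural density. -/
def Ccal : Set (Set ℝ) :=
  {A | A ∈ Mcal ∧ ∃ l : ℝ, Tendsto (rho A) atTop (𝓝 l)}

/-- The natural density `λ(A) = lim_{x→∞} ρ_A(x)`. -/
def lam (A : Set ℝ) : ℝ := limUnder atTop (rho A)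

/-- `S_A(x) = m(A ∩ [0,x))`. -/
def Sfn (A : Set ℝ) (x : ℝ) : ℝ := (volume (A ∩ Set.Ico 0 x)).toReal

/-- The thinning operation `A ∘ B = {x : x ∈ A ∧ S_A(x) ∈ B}`. -/
def thin (A B : Set ℝ) : Set ℝ := {x | x ∈ A ∧ Sfn A x ∈ B}

/-- An f-system on `[0,∞)`: a nonempty collection of subsets of `[0,∞)` closed
under complements (in `[0,∞)`) and finite disjoint unions. -/
structure IsFSystem (F : Set (Set ℝ)) : Prop where
  nonempty : F.Nonempty
  subset_ray : ∀ A ∈ F, A ⊆ Ray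
  compl_mem : ∀ A ∈ F, Ray \ A ∈ F
  union_mem : ∀ A ∈ F, ∀ B ∈ F, A ∩ B = ∅ → A ∪ B ∈ F

/-- A probability pair `(F, μ)` on `[0,∞)`: `F` is an f-system and `μ` is a finitely
additive probability measure on `F` with values in `[0,1]` and `μ([0,∞)) = 1`. -/
structure IsProbPair (F : Set (Set ℝ)) (μ : Set ℝ → ℝ) : Prop where
  fsystem : IsFSystem F
  nonneg : ∀ A ∈ F, 0 ≤ μ A
  le_one : ∀ A ∈ F, μ A ≤ 1
  ray_eq_one : μ Ray = 1
  additive : ∀ A ∈ F, ∀ B ∈ F, A ∩ B = ∅ → μ (A ∪ B) = μ A + μ B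

/-- A weakly thinnable pair (WTP). -/
structure IsWTP (F : Set (Set ℝ)) (μ : Set ℝ → ℝ) : Prop where
  pair : IsProbPair F μ
  Ccal_subset : Ccal ⊆ F
  subset_Mcal : F ⊆ Mcal
  P1 : ∀ C ∈ Ccal, ∀ A ∈ F, thin C A ∈ F ∧ μ (thin C A) = μ C * μ A
  P2 : ∀ A ∈ F, ∀ B ∈ F, (∀ x : ℝ, Sfn B x ≤ Sfn A x) → μ B ≤ μ A
  P3 : ∀ c : ℝ, 0 ≤ c → μ (Set.Ici c) = 1

/-- Coherence of a probability measure `μ` on an f-system `F` on `[0,∞)`. -/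
def Coherent (F : Set (Set ℝ)) (μ : Set ℝ → ℝ) : Prop :=
  ∀ (n : ℕ) (a : Fin n → ℝ) (A : Fin n → Set ℝ), (∀ i, A i ∈ F) →
    0 ≤ ⨆ x : Ray, ∑ i, a i * (ind (A i) ↑x - μ (A i))

/-- `σ_A(D,x) = (1/D) ∫_x^{x+D} 1_A(y) dy`. -/
def sigmaFn (A : Set ℝ) (D x : ℝ) : ℝ := (1 / D) * ∫ y in x..(x + D), ind A y

/-- `U(A) = limsup_{D→∞} sup_{x>0} σ_A(D,x)`. -/
def Ufn (A : Set ℝ) : ℝ :=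
  limsup (fun D => ⨆ x : Set.Ioi (0:ℝ), sigmaFn A D ↑x) atTop

/-- `L(A) = liminf_{D→∞} inf_{x>0} σ_A(D,x)`. -/
def Lfn (A : Set ℝ) : ℝ :=
  liminf (fun D => ⨅ x : Set.Ioi (0:ℝ), sigmaFn A D ↑x) atTop

/-- `𝓦^uni = {A ∈ 𝓜 : L(A) = U(A)}`. -/
def Wuni : Set (Set ℝ) := {A | A ∈ Mcal ∧ Lfn A = Ufn A}

/-- `log(A) = {log a : a ∈ A ∩ [1,∞)}`. -/
def logSet (A : Set ℝ) : Set ℝ := Real.log '' (A ∩ Set.Ici 1)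

/-- `𝓐^uni = {A ∈ 𝓜 : log(A) ∈ 𝓦^uni}`. -/
def Auni : Set (Set ℝ) := {A | A ∈ Mcal ∧ logSet A ∈ Wuni}

/-- `α(A) = λ(log(A))`. -/
def alphaFn (A : Set ℝ) : ℝ := lam (logSet A)

/-- `ξ_A(D,x) = (1/log D) ∫_x^{Dx} ρ_A(y)/y dy`. -/
def xi (A : Set ℝ) (D x : ℝ) : ℝ :=
  (1 / Real.log D) * ∫ y in x..(D * x), rho A y / y

/-- Membership in `𝓟`: `s` is a sequence in `(1,∞)` tending to `∞` and `f` is a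
sequence in `(1,∞)`. -/
def memP (s f : ℕ → ℝ) : Prop :=
  (∀ n, 1 < s n) ∧ Tendsto s atTop atTop ∧ ∀ n, 1 < f n

/-- `𝓐^{s,f} = {A ∈ 𝓜 : lim_n ξ_A(s_n,f_n) exists}`. -/
def Asf (s f : ℕ → ℝ) : Set (Set ℝ) :=
  {A | A ∈ Mcal ∧ ∃ l : ℝ, Tendsto (fun n => xi A (s n) (f n)) atTop (𝓝 l)}

/-- `α^{s,f}(A) = lim_n ξ_A(s_n,f_n)`. -/
def alphasf (s f : ℕ → ℝ) (A : Set ℝ) : ℝ :=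
  limUnder atTop fun n => xi A (s n) (f n)

/-- `τ_A(C,j)`; here `j : ℕ` starting from `0` corresponds to the interval
`[C^j, C^{j+1})`, i.e. to the paper's `τ_A(C, j+1)`. -/
def tau (A : Set ℝ) (C : ℝ) (j : ℕ) : ℝ :=
  (1 / (C ^ j * (C - 1))) * ∫ y in (C ^ j : ℝ)..(C ^ (j + 1)), ind A y

/-- `U^*(C,A) = limsup_{n→∞} sup_k (1/n) Σ_{j=k}^{k+n-1} τ_A(C,j)`. -/
def Ustar (C : ℝ) (A : Set ℝ) : ℝ :=
  limsup (fun n : ℕ => ⨆ k : ℕ, (1 / (n : ℝ)) * ∑ i ∈ Finset.range n, tau A C (k + i)) atTop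

lemma measurableSet_of_mem_Mcal {A : Set ℝ} (hA : A ∈ Mcal) : MeasurableSet A := by
  obtain ⟨a, -, -, rfl⟩ := hA
  exact .iUnion fun _ => measurableSet_Ico

lemma intervalIntegrable_ind {A : Set ℝ} (hA : MeasurableSet A) (a b : ℝ) :
    IntervalIntegrable (ind A) volume a b :=
  (((locallyIntegrable_const 1).indicator hA).integrableOn_isCompact
    isCompact_uIcc).intervalIntegrable

lemma ind_logSet_of_nonneg (A : Set ℝ) {u : ℝ} (hu : 0 ≤ u) :
    ind (logSet A) u = ind A (Real.exp u) := by
  have hmem : u ∈ logSet A ↔ Real.exp u ∈ A := by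
    constructor
    · rintro ⟨a, ⟨haA, ha1⟩, rfl⟩
      rwa [Real.exp_log (zero_lt_one.trans_le ha1)]
    · exact fun h => ⟨Real.exp u, ⟨h, Real.one_le_exp hu⟩, Real.log_exp u⟩
  by_cases h : Real.exp u ∈ A <;> simp [ind, h, hmem]

theorem intervalIntegral_comp_exp (g : ℝ → ℝ) {a b : ℝ} (ha : 0 < a) (hb : 0 < b) :
    ∫ u in Real.log a..Real.log b, g (Real.exp u) = ∫ y in a..b, g y / y := by
  have h := intervalIntegral.integral_comp_mul_deriv_of_deriv_nonneg (g := fun y => g y / y)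
    (a := Real.log a) (b := Real.log b) Real.continuous_exp.continuousOn
    (fun u _ => Real.hasDerivAt_exp u) (fun u _ => (Real.exp_pos u).le)
  simp only [Function.comp_apply, Real.exp_log ha, Real.exp_log hb] at h
  rw [← h]
  exact intervalIntegral.integral_congr fun u _ => (div_mul_cancel₀ _ (Real.exp_pos u).ne').symm

theorem intervalIntegral_ind_logSet (A : Set ℝ) {a b : ℝ} (ha : 1 ≤ a) (hb : 1 ≤ b) :
    ∫ u in Real.log a..Real.log b, ind (logSet A) u = ∫ y in a..b, ind A y / y := by
  rw [← intervalIntegral_comp_exp _ (zero_lt_one.trans_le ha) (zero_lt_one.trans_le hb)]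
  refine intervalIntegral.integral_congr fun u hu => ind_logSet_of_nonneg A ?_
  exact (le_min (Real.log_nonneg ha) (Real.log_nonneg hb)).trans hu.1

theorem intervalIntegral_primitive_div_sq {f : ℝ → ℝ} {x b : ℝ}
    (hf : IntervalIntegrable f volume 0 b) (hx : 0 < x) (hxb : x ≤ b) :
    ∫ y in x..b, (∫ t in (0:ℝ)..y, f t) / y ^ 2 =
      (∫ t in (0:ℝ)..x, f t) / x - (∫ t in (0:ℝ)..b, f t) / b + ∫ y in x..b, f y / y := by
  set F : ℝ → ℝ := fun y => ∫ t in (0:ℝ)..y, f t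
  have hsub : uIcc x b ⊆ uIcc 0 b :=
    uIcc_subset_uIcc (by simp [uIcc_of_le (hx.le.trans hxb), hx.le, hxb]) right_mem_uIcc
  have hpos : ∀ y ∈ uIcc x b, 0 < y := fun y hy => hx.trans_le (by
    rw [uIcc_of_le hxb] at hy; exact hy.1)
  have hF : AbsolutelyContinuousOnInterval F x b :=
    (hf.absolutelyContinuousOnInterval_intervalIntegral (by simp)).mono hsub
  have hinv : AbsolutelyContinuousOnInterval (fun y : ℝ => -y⁻¹) x b :=
    ContDiffOn.absolutelyContinuousOnInterval (fun y hy =>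
      (contDiffAt_inv ℝ (hpos y hy).ne').neg.contDiffWithinAt)
  have hparts := hF.integral_mul_deriv_eq_deriv_mul hinv
  have hderiv_inv : ∀ y ∈ uIcc x b, F y * deriv (fun y : ℝ => -y⁻¹) y = F y / y ^ 2 := by
    intro y hy
    rw [deriv.fun_neg, deriv_inv, neg_neg, div_eq_mul_inv]
  have hderiv_F : ∀ᵐ y, y ∈ Set.uIoc x b → deriv F y * -y⁻¹ = -(f y / y) := by
    filter_upwards [hf.ae_hasDerivAt_integral] with y hy hyI
    rw [(hy (hsub (uIoc_subset_uIcc hyI)) 0 (by simp)).deriv, mul_neg, div_eq_mul_inv]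
  rw [intervalIntegral.integral_congr hderiv_inv, intervalIntegral.integral_congr_ae hderiv_F,
    intervalIntegral.integral_neg] at hparts
  rw [hparts]
  ring

lemma rho_of_ne_zero (A : Set ℝ) {y : ℝ} (hy : y ≠ 0) :
    rho A y = (∫ t in (0:ℝ)..y, ind A t) / y := by
  rw [rho, if_neg hy, one_div_mul_eq_div]

theorem intervalIntegral_rho_div_self {A : Set ℝ} (hA : MeasurableSet A) {x b : ℝ}
    (hx : 0 < x) (hxb : x ≤ b) :
    ∫ y in x..b, rho A y / y = rho A x - rho A b + ∫ y in x..b, ind A y / y := by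
  have hb : b ≠ 0 := (hx.trans_le hxb).ne'
  have hrho : EqOn (fun y => rho A y / y) (fun y => (∫ t in (0:ℝ)..y, ind A t) / y ^ 2)
      (uIcc x b) := fun y hy => by
    have hy : y ≠ 0 := (hx.trans_le (by rw [uIcc_of_le hxb] at hy; exact hy.1)).ne'
    dsimp only
    rw [rho_of_ne_zero A hy, div_div, sq]
  rw [intervalIntegral.integral_congr hrho, rho_of_ne_zero A hx.ne', rho_of_ne_zero A hb,
    intervalIntegral_primitive_div_sq (intervalIntegrable_ind hA 0 b) hx hxb]

/-- For `A ∈ 𝓜` and `D, x > 1`: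
`σ_{log(A)}(log D, log x) = (ρ_A(Dx) − ρ_A(x))/log D + ξ_A(D,x)`. -/
theorem stmt11 (A : Set ℝ) (hA : A ∈ Mcal) (D x : ℝ) (hD : 1 < D) (hx : 1 < x) :
    sigmaFn (logSet A) (Real.log D) (Real.log x) =
      (rho A (D * x) - rho A x) / Real.log D + xi A D x := by
  have hx0 : 0 < x := zero_lt_one.trans hx
  have hxDx : x ≤ D * x := le_mul_of_one_le_left hx0.le hD.le
  have hlog : Real.log x + Real.log D = Real.log (D * x) := by
    rw [Real.log_mul (by positivity) hx0.ne', add_comm]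
  rw [sigmaFn, xi, hlog, intervalIntegral_ind_logSet A hx.le (hx.le.trans hxDx),
    intervalIntegral_rho_div_self (measurableSet_of_mem_Mcal hA) hx0 hxDx]
  ring

end UPN
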